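/- Intertwining relation for the Hua–Pickrell generator: let $A, K \in \mathbb{R}$, let $\mathscr{L}_{A,K} f(u) = (1+u^2) f''(u) + (2Au + K) f'(u)$, and set $h(u) = (1+u^2)^{1-A} e^{K\,\mathrm{arccot}(u)}$. Then for every smooth function $f : \mathbb{R} \to \mathbb{R}$ and every real $u$, $\mathscr{L}_{A,K}(f h)(u) = h(u)\left[\mathscr{L}_{2-A,-K}(f)(u) + 2(1-A) f(u)\right]$. -/

import Mathlib

open Real

/-- The inverse cotangent `arccot : ℝ → (0, π)`. -/
noncomputable def arccot (x : ℝ) : ℝ := Real.arccos (x / Real.sqrt (1 + x ^ 2))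

/-- The Hua–Pickrell generator `𝓛_{A,K}`. -/
noncomputable def HPgen (A K : ℝ) (f : ℝ → ℝ) (u : ℝ) : ℝ :=
  (1 + u ^ 2) * deriv (deriv f) u + (2 * A * u + K) * deriv f u

lemma arccot_eq (x : ℝ) : arccot x = π / 2 - Real.arctan x := by
  rw [arccot, Real.arccos_eq_pi_div_two_sub_arcsin, Real.arctan_eq_arcsin]

theorem HP_intertwining (A K : ℝ) (f : ℝ → ℝ) (hf : ContDiff ℝ (⊤ : ℕ∞) f) :
    let h : ℝ → ℝ := fun u => Real.rpow (1 + u ^ 2) (1 - A) * Real.exp (K * arccot u)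
    ∀ u : ℝ,
      HPgen A K (fun v => f v * h v) u
        = h u * (HPgen (2 - A) (-K) f u + 2 * (1 - A) * f u) := by
  intro h u
  have hpos : ∀ v : ℝ, (0:ℝ) < 1 + v ^ 2 := fun v => by positivity
  set g : ℝ → ℝ := fun v => (2 * (1 - A) * v - K) / (1 + v ^ 2) with hg
  -- first derivative of h
  have hd : ∀ v : ℝ, HasDerivAt h (h v * g v) v := by
    intro v
    have h1 : HasDerivAt (fun w : ℝ => 1 + w ^ 2) (2 * v) v := by
      simpa using (hasDerivAt_pow 2 v).const_add 1
    have h2 : HasDerivAt (fun w : ℝ => (1 + w ^ 2 : ℝ) ^ (1 - A))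
        (2 * v * (1 - A) * (1 + v ^ 2) ^ (1 - A - 1)) v :=
      h1.rpow_const (Or.inl (hpos v).ne')
    have h3 : HasDerivAt (fun w : ℝ => Real.exp (K * arccot w))
        (Real.exp (K * arccot v) * (K * (-(1 / (1 + v ^ 2))))) v := by
      have ha : HasDerivAt (fun w : ℝ => K * arccot w) (K * (-(1 / (1 + v ^ 2)))) v := by
        have := ((Real.hasDerivAt_arctan v).const_sub (π / 2)).const_mul K
        simp only [← arccot_eq] at this
        simpa using this
      simpa [mul_comm] using ha.exp
    have := h2.mul h3
    refine this.congr_deriv ?_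
    symm
    show ((1 + v ^ 2) ^ (1 - A) * Real.exp (K * arccot v)) * g v = _
    rw [Real.rpow_sub_one (hpos v).ne']
    simp only [hg]
    field_simp [hg]
    ring
  -- derivative of g
  set gd : ℝ → ℝ := fun v =>
    (2 * (1 - A) * (1 + v ^ 2) - (2 * (1 - A) * v - K) * (2 * v)) / (1 + v ^ 2) ^ 2 with hgd
  have hgdd : ∀ v : ℝ, HasDerivAt g (gd v) v := by
    intro v
    have h1 : HasDerivAt (fun w : ℝ => 1 + w ^ 2) (2 * v) v := by
      simpa using (hasDerivAt_pow 2 v).const_add 1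
    have h2 : HasDerivAt (fun w : ℝ => 2 * (1 - A) * w - K) (2 * (1 - A)) v := by
      simpa using ((hasDerivAt_id v).const_mul (2 * (1 - A))).sub_const K
    exact h2.div h1 (hpos v).ne'
  -- second derivative of h
  have hd2 : ∀ v : ℝ, HasDerivAt (fun w => h w * g w) (h v * g v * g v + h v * gd v) v :=
    fun v => (hd v).mul (hgdd v)
  -- derivatives of f
  obtain ⟨hfd, hf'⟩ := contDiff_infty_iff_deriv.mp (hf.of_le (by simp))
  have hf1 : ∀ v : ℝ, HasDerivAt f (deriv f v) v := fun v => (hfd v).hasDerivAt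
  have hf2 : ∀ v : ℝ, HasDerivAt (deriv f) (deriv (deriv f) v) v :=
    fun v => ((hf'.differentiable (by norm_num)) v).hasDerivAt
  -- first derivative of f * h
  have key1 : ∀ v : ℝ, HasDerivAt (fun w => f w * h w) (deriv f v * h v + f v * (h v * g v)) v :=
    fun v => (hf1 v).mul (hd v)
  have d1 : deriv (fun w => f w * h w) = fun v => deriv f v * h v + f v * (h v * g v) :=
    funext fun v => (key1 v).deriv
  have key2 : HasDerivAt (fun v => deriv f v * h v + f v * (h v * g v))
      (deriv (deriv f) u * h u + deriv f u * (h u * g u)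
        + (deriv f u * (h u * g u) + f u * (h u * g u * g u + h u * gd u))) u :=
    ((hf2 u).mul (hd u)).add ((hf1 u).mul (hd2 u))
  have d2 : deriv (deriv (fun w => f w * h w)) u
      = deriv (deriv f) u * h u + deriv f u * (h u * g u)
        + (deriv f u * (h u * g u) + f u * (h u * g u * g u + h u * gd u)) := by
    rw [d1]; exact key2.deriv
  simp only [HPgen, d2, (key1 u).deriv]
  rw [hg, hgd]
  have hne : (1 + u ^ 2) ≠ 0 := (hpos u).ne'
  field_simp
  ring
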